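/- arXiv:2404.04987 — 2 statements merged into one kernel-verified Lean document; each statement's English description precedes it below -/
import Mathlib

section
/- Let G be a simple graph on a finite vertex set of n vertices and let i be a natural number. Then the number of maximal independent sets of G of cardinality exactly i is at most 2^(n − i). -/
/-!
Induct on a vertex set `W`, counting maximal independent sets of size `i` inside `W`. If
`#W ≤ i` there is at most one, `W` itself. Otherwise fix `v ∈ W` and split by whether the set
contains `v`. Those containing `v` lose `v` and become maximal independent sets of size
`i - 1` inside `W` minus `v` and its neighbours; those avoiding `v` are maximal independent
sets of size `i` inside `W.erase v`. If `v` has no neighbour in `W`, maximality forces `v` into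
every set, and the first family alone gives `2 ^ ((#W - 1) - (i - 1))`. Otherwise the first
family lives in at most `#W - 2` vertices, and each family contributes `2 ^ (#W - i - 1)`.
-/

open Finset

namespace SimpleGraph

variable {V : Type*} {G : SimpleGraph V}

theorem isIndepSet_iff_forall_not_adj {s : Set V} :
    G.IsIndepSet s ↔ ∀ u ∈ s, ∀ v ∈ s, ¬ G.Adj u v :=
  ⟨fun h _ hu _ hv huv => h hu hv huv.ne huv, fun h _ hu _ hv _ => h _ hu _ hv⟩

theorem IsIndepSet.insert {s : Set V} {v : V} (hs : G.IsIndepSet s)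
    (hv : ∀ u ∈ s, ¬ G.Adj v u) : G.IsIndepSet (insert v s) :=
  Set.Pairwise.insert hs fun u hu _ => ⟨hv u hu, fun h => hv u hu h.symm⟩

variable (G) in
/-- Independent sets of the subgraph induced on `W`. -/
def IsIndepSetIn (W t : Finset V) : Prop := t ⊆ W ∧ G.IsIndepSet (t : Set V)

variable (G) in
def maximalIndepSetsIn (W : Finset V) (i : ℕ) : Set (Finset V) :=
  {s | Maximal (G.IsIndepSetIn W) s ∧ #s = i}

theorem finite_maximalIndepSetsIn (W : Finset V) (i : ℕ) :
    (G.maximalIndepSetsIn W i).Finite :=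
  W.powerset.finite_toSet.subset fun _ hs => mem_powerset.2 hs.1.prop.1

variable {W s : Finset V} {v : V}

theorem ncard_maximalIndepSetsIn_le_one {i : ℕ} (h : #W ≤ i) :
    (G.maximalIndepSetsIn W i).ncard ≤ 1 := by
  refine (Set.ncard_le_ncard (t := {W}) (fun s hs => ?_)).trans (Set.ncard_singleton W).le
  exact eq_of_subset_of_card_le hs.1.prop.1 (hs.2 ▸ h)

theorem mem_of_maximal_of_forall_not_adj [DecidableEq V] (hs : Maximal (G.IsIndepSetIn W) s)
    (hv : v ∈ W) (hadj : ∀ u ∈ s, ¬ G.Adj v u) : v ∈ s := by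
  have hins : G.IsIndepSetIn W (insert v s) :=
    ⟨insert_subset hv hs.prop.1, by simpa only [coe_insert] using hs.prop.2.insert hadj⟩
  exact hs.eq_of_ge hins (subset_insert v s) ▸ mem_insert_self v s

theorem maximal_isIndepSetIn_erase [DecidableEq V] [DecidableRel G.Adj]
    (hs : Maximal (G.IsIndepSetIn W) s) (hv : v ∈ s) :
    Maximal (G.IsIndepSetIn ((W.erase v).filter (¬ G.Adj v ·))) (s.erase v) := by
  obtain ⟨⟨hsW, hsI⟩, hmax⟩ := hs
  refine ⟨⟨fun u hu => ?_, hsI.mono (coe_subset.2 (erase_subset v s))⟩,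
    fun t ⟨htW, htI⟩ hst => ?_⟩
  · obtain ⟨huv, hus⟩ := mem_erase.1 hu
    exact mem_filter.2
      ⟨mem_erase.2 ⟨huv, hsW hus⟩, isIndepSet_iff_forall_not_adj.1 hsI v hv u hus⟩
  have hvt : v ∉ t := fun h => (mem_erase.1 (mem_filter.1 (htW h)).1).1 rfl
  have hins : G.IsIndepSetIn W (insert v t) := by
    refine
      ⟨insert_subset (hsW hv) (htW.trans ((filter_subset _ _).trans (erase_subset v W))), ?_⟩
    simpa only [coe_insert] using htI.insert fun u hu => (mem_filter.1 (htW hu)).2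
  have hts : insert v t ⊆ s := hmax hins (insert_erase hv ▸ insert_subset_insert v hst)
  exact subset_erase.2 ⟨(subset_insert v t).trans hts, hvt⟩

theorem ncard_maximalIndepSetsIn_inter_mem_le [DecidableEq V] [DecidableRel G.Adj] (i : ℕ) :
    (G.maximalIndepSetsIn W i ∩ {s | v ∈ s}).ncard ≤
      (G.maximalIndepSetsIn ((W.erase v).filter (¬ G.Adj v ·)) (i - 1)).ncard :=
  Set.ncard_le_ncard_of_injOn (fun s => s.erase v)
    (fun _ ⟨⟨hs, hcard⟩, hv⟩ =>
      ⟨maximal_isIndepSetIn_erase hs hv, by rw [card_erase_of_mem hv, hcard]⟩)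
    ((erase_injOn' v).mono Set.inter_subset_right) (finite_maximalIndepSetsIn _ _)

theorem ncard_maximalIndepSetsIn_diff_mem_le [DecidableEq V] (i : ℕ) :
    (G.maximalIndepSetsIn W i \ {s | v ∈ s}).ncard ≤
      (G.maximalIndepSetsIn (W.erase v) i).ncard :=
  Set.ncard_le_ncard
    (fun _ ⟨⟨hs, hcard⟩, hv⟩ =>
      ⟨hs.mono (fun _ ht => ⟨ht.1.trans (erase_subset v W), ht.2⟩)
        ⟨subset_erase.2 ⟨hs.prop.1, hv⟩, hs.prop.2⟩, hcard⟩)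
    (finite_maximalIndepSetsIn _ _)

theorem maximalIndepSetsIn_diff_mem_eq_empty [DecidableEq V] (hv : v ∈ W)
    (hadj : ∀ u ∈ W, ¬ G.Adj v u) (i : ℕ) : G.maximalIndepSetsIn W i \ {s | v ∈ s} = ∅ :=
  Set.sdiff_eq_empty.2 fun _ hs =>
    mem_of_maximal_of_forall_not_adj hs.1 hv fun u hu => hadj u (hs.1.prop.1 hu)

theorem ncard_maximalIndepSetsIn_le (W : Finset V) (i : ℕ) :
    (G.maximalIndepSetsIn W i).ncard ≤ 2 ^ (#W - i) := by
  classical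
  induction W using Finset.strongInduction generalizing i with | H W ih => ?_
  rcases le_or_gt #W i with hWi | hiW
  · exact (ncard_maximalIndepSetsIn_le_one hWi).trans Nat.one_le_two_pow
  obtain ⟨v, hv⟩ : W.Nonempty := card_pos.1 (by omega)
  set W' := (W.erase v).filter (¬ G.Adj v ·)
  have hW'W : W' ⊂ W := (filter_subset _ _).trans_ssubset (erase_ssubset hv)
  have hcard : #(W.erase v) + 1 = #W := card_erase_add_one hv
  have hcontains : (G.maximalIndepSetsIn W i ∩ {s | v ∈ s}).ncard ≤ 2 ^ (#W' - (i - 1)) :=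
    (ncard_maximalIndepSetsIn_inter_mem_le i).trans (ih W' hW'W _)
  rw [← Set.ncard_inter_add_ncard_sdiff_eq_ncard _ {s | v ∈ s} (finite_maximalIndepSetsIn W i)]
  by_cases hN : ∃ w ∈ W, G.Adj v w
  · obtain ⟨w, hw, hvw⟩ := hN
    have hW' : #W' < #(W.erase v) :=
      card_lt_card (filter_ssubset.2 ⟨w, mem_erase.2 ⟨hvw.ne.symm, hw⟩, not_not.2 hvw⟩)
    have havoids : (G.maximalIndepSetsIn W i \ {s | v ∈ s}).ncard ≤ 2 ^ (#(W.erase v) - i) :=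
      (ncard_maximalIndepSetsIn_diff_mem_le i).trans (ih _ (erase_ssubset hv) i)
    calc _ ≤ 2 ^ (#W - i - 1) + 2 ^ (#W - i - 1) :=
          add_le_add (hcontains.trans (Nat.pow_le_pow_right two_pos (by omega)))
            (havoids.trans (Nat.pow_le_pow_right two_pos (by omega)))
      _ = 2 ^ (#W - i) := by rw [← two_mul, ← pow_succ']; congr 1; omega
  · push Not at hN
    rw [maximalIndepSetsIn_diff_mem_eq_empty hv hN, Set.ncard_empty, add_zero]
    have hW' : #W' ≤ #(W.erase v) := card_le_card (filter_subset _ _)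
    exact hcontains.trans (Nat.pow_le_pow_right two_pos (by omega))

end SimpleGraph

/-- The number of maximal independent sets of cardinality exactly `i` in an
`n`-vertex graph `G` is at most `2 ^ (n - i)`. -/
theorem stmt3 {V : Type*} [Fintype V] (G : SimpleGraph V) (i : ℕ) :
    ({s : Finset V | (∀ u ∈ s, ∀ v ∈ s, ¬ G.Adj u v) ∧
        (∀ t : Finset V, (∀ u ∈ t, ∀ v ∈ t, ¬ G.Adj u v) → s ⊆ t → t = s) ∧
        s.card = i}.ncard)
      ≤ 2 ^ (Fintype.card V - i) := by
  convert G.ncard_maximalIndepSetsIn_le (univ : Finset V) i using 2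
  · ext s
    simp only [SimpleGraph.maximalIndepSetsIn, SimpleGraph.IsIndepSetIn, maximal_iff,
      SimpleGraph.isIndepSet_iff_forall_not_adj, subset_univ, true_and, Set.mem_ofPred_eq,
      mem_coe]
    grind
  · rw [card_univ]
end

section
/- Let δ > 0 and 0 < κ ≤ 1 be reals, let r ≥ 1 and b be positive integers with b ≥ 3 δ^{−3} κ^{−2}, set n = r·b, and let H be a nonempty finite pairwise independent family of functions from [n] = {1,...,n} to [r] = {1,...,r}. Then for any three subsets A_1, A_2, A_3 ⊆ [n] with |A_i| ≥ κn for each i ∈ {1,2,3}, there exist h ∈ H and a set Q ⊆ [r] with |Q| ≤ δr such that for every j ∈ [r] \ Q and every i ∈ {1,2,3}: | |A_i ∩ h^{−1}(j)| − |A_i|/r | ≤ δ|A_i|/r (that is, each A_i is (δ,r)-balanced onto h^{−1}(j) for all j outside Q). -/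
/-!
Second-moment method. For a finite set `A` and a fixed `h`, the squared deviations
`∑ⱼ (|A ∩ h⁻¹(j)| - |A|/r)²` equal `∑_{x,y ∈ A} ([h x = h y] - 1/r)`, so averaging over a pairwise
independent family only involves collision probabilities, which are `1/r` off the diagonal. Hence
the average over `h ∈ H` is `|A|(1 - 1/r) ≤ n`, and some `h` has total squared deviation at most
`3n` over the three sets. Every bad `j` contributes more than `(δκn/r)²` to it, so there are at
most `3r²/(δ²κ²n) = 3r/(δ²κ²b) ≤ δr` of them.
-/

open Finset

theorem card_filter_exists_lt_abs_mul_sq_le {β γ : Type*} [Fintype β] [Fintype γ]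
    (d : γ → β → ℝ) (t : γ → ℝ) {s : ℝ} (hs : 0 ≤ s) (hst : ∀ i, s ≤ t i) :
    #{j | ∃ i, t i < |d i j|} * s ^ 2 ≤ ∑ i, ∑ j, d i j ^ 2 := by
  classical
  have hbad : ∀ j ∈ ({j | ∃ i, t i < |d i j|} : Finset β), s ^ 2 ≤ ∑ i, d i j ^ 2 := by
    intro j hj
    obtain ⟨i, hi⟩ := (mem_filter.1 hj).2
    calc s ^ 2 ≤ |d i j| ^ 2 := by gcongr; linarith [hst i]
      _ = d i j ^ 2 := sq_abs _
      _ ≤ ∑ i, d i j ^ 2 := single_le_sum (fun i _ => sq_nonneg (d i j)) (mem_univ i)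
  calc #{j | ∃ i, t i < |d i j|} * s ^ 2 ≤ ∑ j ∈ {j | ∃ i, t i < |d i j|}, ∑ i, d i j ^ 2 := by
        simpa using card_nsmul_le_sum _ _ _ hbad
    _ ≤ ∑ j, ∑ i, d i j ^ 2 :=
        sum_le_sum_of_subset_of_nonneg (subset_univ _) fun _ _ _ => by positivity
    _ = ∑ i, ∑ j, d i j ^ 2 := sum_comm

section Fibers

variable {α β : Type*} [Fintype β] [DecidableEq β]

theorem sum_card_fiber (f : α → β) (A : Finset α) : ∑ j, (#{x ∈ A | f x = j} : ℝ) = #A := by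
  exact_mod_cast (card_eq_sum_card_fiberwise fun x _ => mem_univ (f x)).symm

theorem sum_sq_card_fiber (f : α → β) (A : Finset α) :
    ∑ j, (#{x ∈ A | f x = j} : ℝ) ^ 2 = ∑ x ∈ A, ∑ y ∈ A, if f x = f y then 1 else 0 := by
  simp only [natCast_card_filter, sq, sum_mul_sum]
  rw [sum_comm]
  refine sum_congr rfl fun x _ => ?_
  rw [sum_comm]
  refine sum_congr rfl fun y _ => ?_
  simp only [mul_boole, eq_comm (a := f y), sum_ite_eq', mem_univ, if_true]

theorem sum_sq_card_fiber_sub_mean [Nonempty β] (f : α → β) (A : Finset α) :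
    ∑ j, ((#{x ∈ A | f x = j} : ℝ) - #A / Fintype.card β) ^ 2
      = ∑ x ∈ A, ∑ y ∈ A, ((if f x = f y then 1 else 0 : ℝ) - 1 / Fintype.card β) := by
  simp only [sub_sq, sum_add_distrib, sum_sub_distrib, ← sum_mul, ← mul_sum, sum_card_fiber,
    sum_sq_card_fiber, sum_const, card_univ, nsmul_eq_mul]
  field_simp
  ring

end Fibers

section PairwiseIndependent

variable {ι α β : Type*} [Fintype ι] [Fintype β] [DecidableEq β]

def IsPairwiseIndependent (H : ι → α → β) : Prop :=
  ∀ x y, x ≠ y → ∀ j k, #{a | H a x = j ∧ H a y = k} * Fintype.card β ^ 2 = Fintype.card ι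

namespace IsPairwiseIndependent

variable {H : ι → α → β}

theorem card_apply_eq_apply [Nonempty β] (hH : IsPairwiseIndependent H) {x y : α} (hxy : x ≠ y) :
    (#{a | H a x = H a y} : ℝ) = Fintype.card ι / Fintype.card β := by
  have hfiber (j : β) :
      (#{a | H a x = j ∧ H a y = j} : ℝ) = Fintype.card ι / Fintype.card β ^ 2 := by
    rw [eq_div_iff (by positivity)]
    exact_mod_cast hH x y hxy j j
  have hsplit : #{a | H a x = H a y} = ∑ j, #{a | H a x = j ∧ H a y = j} := by
    rw [card_eq_sum_card_fiberwise fun a _ => mem_univ (H a x)]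
    refine sum_congr rfl fun j _ => ?_
    rw [filter_filter]
    exact congrArg card (filter_congr fun a _ => by grind)
  rw [hsplit]
  push_cast
  simp only [hfiber, sum_const, card_univ, nsmul_eq_mul]
  field_simp

theorem sum_sum_sq_deviation [Nonempty β] (hH : IsPairwiseIndependent H) (A : Finset α) :
    ∑ a, ∑ j, ((#{x ∈ A | H a x = j} : ℝ) - #A / Fintype.card β) ^ 2
      = Fintype.card ι * #A * (1 - 1 / Fintype.card β : ℝ) := by
  classical
  have hpair (x y : α) : ∑ a, ((if H a x = H a y then 1 else 0 : ℝ) - 1 / Fintype.card β)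
      = if x = y then Fintype.card ι * (1 - 1 / Fintype.card β : ℝ) else 0 := by
    rw [sum_sub_distrib, sum_boole]
    split_ifs with hxy
    · simp [hxy, mul_sub]
    · rw [hH.card_apply_eq_apply hxy]
      simp [div_eq_mul_inv]
  simp only [sum_sq_card_fiber_sub_mean]
  rw [sum_comm]
  calc ∑ x ∈ A, ∑ a, ∑ y ∈ A, ((if H a x = H a y then 1 else 0 : ℝ) - 1 / Fintype.card β)
      = ∑ x ∈ A, ∑ y ∈ A, if x = y then Fintype.card ι * (1 - 1 / Fintype.card β : ℝ) else 0 :=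
        sum_congr rfl fun x _ => by rw [sum_comm]; exact sum_congr rfl fun y _ => hpair x y
    _ = Fintype.card ι * #A * (1 - 1 / Fintype.card β : ℝ) := by
        simp; ring

theorem exists_sum_sum_sq_deviation_le [Nonempty ι] [Nonempty β] [Fintype α] {γ : Type*}
    [Fintype γ] (hH : IsPairwiseIndependent H) (A : γ → Finset α) :
    ∃ a, ∑ i, ∑ j, ((#{x ∈ A i | H a x = j} : ℝ) - #(A i) / Fintype.card β) ^ 2
      ≤ Fintype.card γ * Fintype.card α := by
  have hterm (i : γ) :
      Fintype.card ι * #(A i) * (1 - 1 / Fintype.card β : ℝ) ≤ Fintype.card ι * Fintype.card α :=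
    calc Fintype.card ι * #(A i) * (1 - 1 / Fintype.card β : ℝ)
        ≤ Fintype.card ι * #(A i) := mul_le_of_le_one_right (by positivity) (by simp)
      _ ≤ Fintype.card ι * Fintype.card α := by gcongr; exact card_le_univ _
  have htotal : ∑ a, ∑ i, ∑ j, ((#{x ∈ A i | H a x = j} : ℝ) - #(A i) / Fintype.card β) ^ 2
      ≤ ∑ _a : ι, (Fintype.card γ * Fintype.card α : ℝ) := by
    rw [sum_comm]
    simp only [hH.sum_sum_sq_deviation, sum_const, card_univ, nsmul_eq_mul]
    exact (sum_le_sum fun i _ => hterm i).trans_eq (by simp; ring)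
  obtain ⟨a, -, ha⟩ := exists_le_of_sum_le univ_nonempty htotal
  exact ⟨a, ha⟩

end IsPairwiseIndependent

end PairwiseIndependent

theorem stmt11_general (δ κ : ℝ) (hδ : 0 < δ) (hκ0 : 0 < κ)
    (r b : ℕ) (hr : 1 ≤ r)
    (hb : 3 / (δ ^ 3 * κ ^ 2) ≤ (b : ℝ))
    (n : ℕ) (hn : n = r * b)
    (N : ℕ) (hN : 0 < N) (H : Fin N → (Fin n → Fin r))
    (hpi : ∀ i i' : Fin n, i ≠ i' → ∀ j j' : Fin r,
      (Finset.univ.filter (fun a : Fin N => H a i = j ∧ H a i' = j')).card * r ^ 2 = N)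
    (A : Fin 3 → Finset (Fin n)) (hA : ∀ i, κ * n ≤ ((A i).card : ℝ)) :
    ∃ a : Fin N, ∃ Q : Finset (Fin r), (Q.card : ℝ) ≤ δ * r ∧
      ∀ j : Fin r, j ∉ Q → ∀ i : Fin 3,
        |(((A i).filter (fun x => H a x = j)).card : ℝ) - ((A i).card : ℝ) / r|
          ≤ δ * ((A i).card : ℝ) / r := by
  have : Nonempty (Fin N) := ⟨⟨0, hN⟩⟩
  have : Nonempty (Fin r) := ⟨⟨0, hr⟩⟩
  have hH : IsPairwiseIndependent H := by simpa [IsPairwiseIndependent] using hpi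
  obtain ⟨a, ha⟩ := hH.exists_sum_sum_sq_deviation_le A
  have hr0 : (0 : ℝ) < r := by exact_mod_cast hr
  have hb0 : (0 : ℝ) < b := lt_of_lt_of_le (by positivity) hb
  have hnrb : (n : ℝ) = r * b := by exact_mod_cast hn
  let d (i : Fin 3) (j : Fin r) : ℝ := #{x ∈ A i | H a x = j} - #(A i) / r
  have hQ := card_filter_exists_lt_abs_mul_sq_le d (fun i => δ * #(A i) / r)
    (s := δ * κ * b) (by positivity) fun i => by
      rw [le_div_iff₀ hr0]
      calc δ * κ * b * r = δ * (κ * n) := by rw [hnrb]; ring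
        _ ≤ δ * #(A i) := by gcongr; exact hA i
  have hb' : 3 ≤ δ ^ 3 * κ ^ 2 * b := by rwa [div_le_iff₀ (by positivity), mul_comm] at hb
  -- `Q` is the set `{j | ∃ i, δ|A i|/r < |d i j|}` of `hQ`.
  refine ⟨a, _, le_of_mul_le_mul_right (hQ.trans ?_) (by positivity),
    fun j hj => by simpa [d] using hj⟩
  calc _ ≤ 3 * (r * b : ℝ) := by simpa [hnrb] using ha
    _ ≤ δ ^ 3 * κ ^ 2 * b * (r * b) := by gcongr
    _ = δ * r * (δ * κ * b) ^ 2 := by ring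

/-- Central claim for constructing balancing families: if `b ≥ 3δ⁻³κ⁻²` and
`n = r·b`, then for any three sets `A₁, A₂, A₃ ⊆ [n]` of size at least `κn`
there exist `h ∈ H` and `Q ⊆ [r]` with `|Q| ≤ δr` such that each `Aᵢ` is
`(δ, r)`-balanced onto `h⁻¹(j)` for every `j ∈ [r] \ Q`. -/
theorem stmt11 (δ κ : ℝ) (hδ : 0 < δ) (hκ0 : 0 < κ) (hκ1 : κ ≤ 1)
    (r b : ℕ) (hr : 1 ≤ r) (hb0 : 0 < b)
    (hb : 3 / (δ ^ 3 * κ ^ 2) ≤ (b : ℝ))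
    (n : ℕ) (hn : n = r * b)
    (N : ℕ) (hN : 0 < N) (H : Fin N → (Fin n → Fin r))
    (hpi : ∀ i i' : Fin n, i ≠ i' → ∀ j j' : Fin r,
      (Finset.univ.filter (fun a : Fin N => H a i = j ∧ H a i' = j')).card * r ^ 2 = N)
    (A : Fin 3 → Finset (Fin n)) (hA : ∀ i, κ * n ≤ ((A i).card : ℝ)) :
    ∃ a : Fin N, ∃ Q : Finset (Fin r), (Q.card : ℝ) ≤ δ * r ∧
      ∀ j : Fin r, j ∉ Q → ∀ i : Fin 3,
        |(((A i).filter (fun x => H a x = j)).card : ℝ) - ((A i).card : ℝ) / r|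
          ≤ δ * ((A i).card : ℝ) / r :=
  stmt11_general δ κ hδ hκ0 r b hr hb n hn N hN H hpi A hA
end
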